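/- (Sufficient condition for Bell nonlocality.) Let ρ be a density matrix on ℂ^d ⊗ ℂ^d and let B = {B_{ab|xy}} be a Bell functional with nonnegative coefficients and ω(B) > 0. If the fully entangled fraction satisfies F(ρ) > 1 / LV(|Ψ_d^+⟩⟨Ψ_d^+|, B), then ρ violates the Bell inequality specified by B: there exist POVM families E_A for Alice and E_B for Bob on ℂ^d such that the quantum correlation P(a,b|x,y) = tr[ρ (E_{a|x} ⊗ E_{b|y})] satisfies Γ(P, B) > 1; in particular, ρ is Bell nonlocal. -/

import Mathlib

/-!
Pick a local unitary `U` with `F := ⟨Ψ⁺|(U ⊗ 1) ρ (U ⊗ 1)†|Ψ⁺⟩ > 1 / LV(Ψ⁺, B)` and POVMs whose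
Bell operator `W ≥ 0` satisfies `⟨Ψ⁺|W|Ψ⁺⟩ · F > ω(B)`. Twirling `W` over the `d²` Weyl pairs
`V̄ ⊗ V`, which fix `|Ψ⁺⟩`, gives an operator with eigenvector `|Ψ⁺⟩` and eigenvalue
`d² ⟨Ψ⁺|W|Ψ⁺⟩`, hence one dominating `d² ⟨Ψ⁺|W|Ψ⁺⟩ |Ψ⁺⟩⟨Ψ⁺|`. Its expectation in the rotated state
thus exceeds `d² ω(B)`, so one of the `d²` Weyl-rotated measurement pairs already violates the
Bell inequality on `ρ`.
-/

open scoped ComplexOrder Kronecker Matrix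
open MeasureTheory

noncomputable section

namespace QSteer

/-- Square complex matrices indexed by `ι` (the Hilbert space `ℂ^ι`). -/
abbrev HMat (ι : Type) : Type := Matrix ι ι ℂ

/-- A density matrix: positive semidefinite with unit trace. -/
def IsDensity {ι : Type} [Fintype ι] (ρ : HMat ι) : Prop :=
  ρ.PosSemidef ∧ ρ.trace = 1

/-- A POVM family `{E_{a|x}}`: positive semidefinite effects summing to the identity
for every setting `x`. -/
def IsPOVM {ι A X : Type} [Fintype ι] [Fintype A] [DecidableEq ι]
    (E : A → X → HMat ι) : Prop :=
  (∀ a x, (E a x).PosSemidef) ∧ ∀ x, ∑ a, E a x = 1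

/-- A projective measurement family: a POVM family whose effects are orthogonal
projections. -/
def IsProjPOVM {ι A X : Type} [Fintype ι] [Fintype A] [DecidableEq ι]
    (E : A → X → HMat ι) : Prop :=
  IsPOVM E ∧ ∀ a x, (E a x).IsHermitian ∧ E a x * E a x = E a x

/-- An assemblage `{σ_{a|x}}`: positive semidefinite matrices such that `∑_a σ_{a|x}`
is the same unit-trace matrix for every `x`. -/
def IsAssemblage {ι A X : Type} [Fintype ι] [Fintype A] (σ : A → X → HMat ι) : Prop :=
  (∀ a x, (σ a x).PosSemidef) ∧ (∀ x x', ∑ a, σ a x = ∑ a, σ a x') ∧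
    ∀ x, (∑ a, σ a x).trace = 1

/-- An unsteerable assemblage: one admitting a local-hidden-state model. -/
def IsUnsteerable {ι A X : Type} [Fintype ι] [Fintype A] (σ : A → X → HMat ι) : Prop :=
  ∃ (n : ℕ) (w : Fin n → ℝ) (p : A → X → Fin n → ℝ) (τ : Fin n → HMat ι),
    (∀ l, 0 ≤ w l) ∧ (∑ l, w l = 1) ∧
    (∀ a x l, 0 ≤ p a x l) ∧ (∀ x l, ∑ a, p a x l = 1) ∧
    (∀ l, IsDensity (τ l)) ∧
    ∀ a x, σ a x = ∑ l, (w l * p a x l) • τ l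

/-- A steering functional `{F_{a|x}}`: a family of positive semidefinite matrices. -/
def IsSteeringFunctional {ι A X : Type} [Fintype ι] (F : A → X → HMat ι) : Prop :=
  ∀ a x, (F a x).PosSemidef

/-- The value `∑_{a,x} tr(F_{a|x} σ_{a|x})` (real part). -/
def steeringValue {ι A X : Type} [Fintype ι] [Fintype A] [Fintype X]
    (F σ : A → X → HMat ι) : ℝ :=
  ∑ x, ∑ a, ((F a x * σ a x).trace).re

/-- The steering bound `ω_s(F)`. -/
def steeringBound {ι A X : Type} [Fintype ι] [Fintype A] [Fintype X]
    (F : A → X → HMat ι) : ℝ :=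
  sSup {r : ℝ | ∃ σ : A → X → HMat ι, IsAssemblage σ ∧ IsUnsteerable σ ∧
    r = steeringValue F σ}

/-- The steering fraction `Γ_s(σ, F)`. -/
def steeringFraction {ι A X : Type} [Fintype ι] [Fintype A] [Fintype X]
    (σ F : A → X → HMat ι) : ℝ :=
  steeringValue F σ / steeringBound F

/-- Partial trace over the first (Alice's) tensor factor. -/
def ptraceA {ιA ιB : Type} [Fintype ιA] (M : Matrix (ιA × ιB) (ιA × ιB) ℂ) : HMat ιB :=
  Matrix.of fun j j' => ∑ i, M (i, j) (i, j')

/-- The assemblage induced by a bipartite state and Alice's POVMs: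
`σ_{a|x} = Tr_A[ρ (E_{a|x} ⊗ I)]`. -/
def inducedAssemblage {ιA ιB A X : Type} [Fintype ιA] [Fintype ιB] [DecidableEq ιB]
    (ρ : Matrix (ιA × ιB) (ιA × ιB) ℂ) (E : A → X → HMat ιA) : A → X → HMat ιB :=
  fun a x => ptraceA (ρ * ((E a x) ⊗ₖ (1 : HMat ιB)))

/-- Largest steering-inequality violation `LV_s(ρ, F)` over Alice POVM families. -/
def LVs {ιA ιB A X : Type} [Fintype ιA] [Fintype ιB] [DecidableEq ιA] [DecidableEq ιB]
    [Fintype A] [Fintype X]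
    (ρ : Matrix (ιA × ιB) (ιA × ιB) ℂ) (F : A → X → HMat ιB) : ℝ :=
  sSup {r : ℝ | ∃ E : A → X → HMat ιA, IsPOVM E ∧
    r = steeringFraction (inducedAssemblage ρ E) F}

/-- Largest steering-inequality violation `LV_s^π(ρ, F)` over projective Alice families. -/
def LVsProj {ιA ιB A X : Type} [Fintype ιA] [Fintype ιB] [DecidableEq ιA] [DecidableEq ιB]
    [Fintype A] [Fintype X]
    (ρ : Matrix (ιA × ιB) (ιA × ιB) ℂ) (F : A → X → HMat ιB) : ℝ :=
  sSup {r : ℝ | ∃ E : A → X → HMat ιA, IsProjPOVM E ∧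
    r = steeringFraction (inducedAssemblage ρ E) F}

/-- The maximally entangled state `|Ψ⁺⟩⟨Ψ⁺|` on `ℂ^ι ⊗ ℂ^ι`. -/
def maxEnt (ι : Type) [Fintype ι] [DecidableEq ι] : Matrix (ι × ι) (ι × ι) ℂ :=
  Matrix.of fun pq rs => if pq.1 = pq.2 ∧ rs.1 = rs.2 then ((Fintype.card ι : ℂ))⁻¹ else 0

/-- The fully entangled fraction `F(ρ) = sup_U ⟨Ψ⁺|(U ⊗ I) ρ (U ⊗ I)†|Ψ⁺⟩`. -/
def fef {ι : Type} [Fintype ι] [DecidableEq ι] (ρ : Matrix (ι × ι) (ι × ι) ℂ) : ℝ :=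
  sSup {r : ℝ | ∃ U : Matrix ι ι ℂ, U ∈ Matrix.unitaryGroup ι ℂ ∧
    r = ((maxEnt ι * ((U ⊗ₖ (1 : HMat ι)) * ρ * ((U ⊗ₖ (1 : HMat ι))ᴴ))).trace).re}

/-- A local-hidden-variable (Bell-local) correlation. -/
def IsLHV {A B X Y : Type} [Fintype A] [Fintype B] (P : A → B → X → Y → ℝ) : Prop :=
  ∃ (n : ℕ) (w : Fin n → ℝ) (pA : A → X → Fin n → ℝ) (pB : B → Y → Fin n → ℝ),
    (∀ l, 0 ≤ w l) ∧ (∑ l, w l = 1) ∧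
    (∀ a x l, 0 ≤ pA a x l) ∧ (∀ x l, ∑ a, pA a x l = 1) ∧
    (∀ b y l, 0 ≤ pB b y l) ∧ (∀ y l, ∑ b, pB b y l = 1) ∧
    ∀ a b x y, P a b x y = ∑ l, w l * pA a x l * pB b y l

/-- The Bell value `∑ B_{ab|xy} P(a,b|x,y)`. -/
def bellValue {A B X Y : Type} [Fintype A] [Fintype B] [Fintype X] [Fintype Y]
    (Bf P : A → B → X → Y → ℝ) : ℝ :=
  ∑ x, ∑ y, ∑ a, ∑ b, Bf a b x y * P a b x y

/-- The local bound `ω(B)`. -/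
def localBound {A B X Y : Type} [Fintype A] [Fintype B] [Fintype X] [Fintype Y]
    (Bf : A → B → X → Y → ℝ) : ℝ :=
  sSup {r : ℝ | ∃ P : A → B → X → Y → ℝ, IsLHV P ∧ r = bellValue Bf P}

/-- The nonlocality fraction `Γ(P, B)`. -/
def nonlocalityFraction {A B X Y : Type} [Fintype A] [Fintype B] [Fintype X] [Fintype Y]
    (P Bf : A → B → X → Y → ℝ) : ℝ :=
  bellValue Bf P / localBound Bf

/-- The quantum correlation `P(a,b|x,y) = tr[ρ (E_{a|x} ⊗ E_{b|y})]`. -/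
def quantumCorr {ιA ιB A B X Y : Type} [Fintype ιA] [Fintype ιB]
    (ρ : Matrix (ιA × ιB) (ιA × ιB) ℂ) (EA : A → X → HMat ιA) (EB : B → Y → HMat ιB) :
    A → B → X → Y → ℝ :=
  fun a b x y => ((ρ * ((EA a x) ⊗ₖ (EB b y))).trace).re

/-- Largest Bell-inequality violation `LV(ρ, B)` over pairs of POVM families. -/
def LV {ιA ιB A B X Y : Type} [Fintype ιA] [Fintype ιB] [DecidableEq ιA] [DecidableEq ιB]
    [Fintype A] [Fintype B] [Fintype X] [Fintype Y]
    (ρ : Matrix (ιA × ιB) (ιA × ιB) ℂ) (Bf : A → B → X → Y → ℝ) : ℝ :=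
  sSup {r : ℝ | ∃ (EA : A → X → HMat ιA) (EB : B → Y → HMat ιB),
    IsPOVM EA ∧ IsPOVM EB ∧ r = nonlocalityFraction (quantumCorr ρ EA EB) Bf}

/-- Largest Bell-inequality violation `LV^π(ρ, B)` over pairs of projective families. -/
def LVProj {ιA ιB A B X Y : Type} [Fintype ιA] [Fintype ιB] [DecidableEq ιA] [DecidableEq ιB]
    [Fintype A] [Fintype B] [Fintype X] [Fintype Y]
    (ρ : Matrix (ιA × ιB) (ιA × ιB) ℂ) (Bf : A → B → X → Y → ℝ) : ℝ :=
  sSup {r : ℝ | ∃ (EA : A → X → HMat ιA) (EB : B → Y → HMat ιB),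
    IsProjPOVM EA ∧ IsProjPOVM EB ∧ r = nonlocalityFraction (quantumCorr ρ EA EB) Bf}

/-- The steering functional induced by a Bell functional and Bob's POVMs:
`F_{a|x} = ∑_{b,y} B_{ab|xy} E_{b|y}`. -/
def inducedF {ιB A B X Y : Type} [Fintype B] [Fintype Y]
    (Bf : A → B → X → Y → ℝ) (EB : B → Y → HMat ιB) : A → X → HMat ιB :=
  fun a x => ∑ y, ∑ b, Bf a b x y • EB b y

/-- The `k`-fold tensor power of a bipartite state, regrouped as a bipartite state on
`ℂ^{d^k} ⊗ ℂ^{d^k}` (Alice's factors grouped together, likewise Bob's). -/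
def tensorPower {ι : Type} (ρ : Matrix (ι × ι) (ι × ι) ℂ) (k : ℕ) :
    Matrix ((Fin k → ι) × (Fin k → ι)) ((Fin k → ι) × (Fin k → ι)) ℂ :=
  Matrix.of fun p q => ∏ t, ρ (p.1 t, p.2 t) (q.1 t, q.2 t)

/-- The isotropic state `ρ_iso(p) = p |Ψ⁺⟩⟨Ψ⁺| + (1-p) I/d²` on `ℂ^d ⊗ ℂ^d`. -/
def iso (d : ℕ) (p : ℝ) : Matrix (Fin d × Fin d) (Fin d × Fin d) ℂ :=
  p • maxEnt (Fin d) + ((1 - p) / (d : ℝ) ^ 2) • (1 : Matrix (Fin d × Fin d) (Fin d × Fin d) ℂ)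

/-- `sup_F Γ_s(σ, F)` over positive semidefinite steering functionals with positive
steering bound. -/
def supFrac {ι A X : Type} [Fintype ι] [Fintype A] [Fintype X] (σ : A → X → HMat ι) : ℝ :=
  sSup {r : ℝ | ∃ F : A → X → HMat ι, IsSteeringFunctional F ∧ 0 < steeringBound F ∧
    r = steeringFraction σ F}

/-- The optimal steering fraction `S_O(σ) = max{0, sup_F Γ_s(σ, F) − 1}`. -/
def SO {ι A X : Type} [Fintype ι] [Fintype A] [Fintype X] (σ : A → X → HMat ι) : ℝ :=
  max 0 (supFrac σ - 1)

/-- The steerable weight `S_W(σ)`. -/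
def SW {ι A X : Type} [Fintype ι] [Fintype A] [Fintype X] (σ : A → X → HMat ι) : ℝ :=
  sInf {ν : ℝ | 0 ≤ ν ∧ ν ≤ 1 ∧ ∃ σUS σS : A → X → HMat ι,
    IsAssemblage σUS ∧ IsUnsteerable σUS ∧ IsAssemblage σS ∧
    ∀ a x, σ a x = (1 - ν) • σUS a x + ν • σS a x}

/-- The steering robustness `S_R(σ)`. -/
def SR {ι A X : Type} [Fintype ι] [Fintype A] [Fintype X] (σ : A → X → HMat ι) : ℝ :=
  sInf {ν : ℝ | 0 ≤ ν ∧ ∃ τ : A → X → HMat ι, IsAssemblage τ ∧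
    IsUnsteerable (fun a x => (1 / (1 + ν)) • σ a x + (ν / (1 + ν)) • τ a x)}

/-- Separability of a bipartite state. -/
def IsSeparable {ιA ιB : Type} [Fintype ιA] [Fintype ιB]
    (ρ : Matrix (ιA × ιB) (ιA × ιB) ℂ) : Prop :=
  ∃ (n : ℕ) (w : Fin n → ℝ) (ρA : Fin n → HMat ιA) (ρB : Fin n → HMat ιB),
    (∀ l, 0 ≤ w l) ∧ (∑ l, w l = 1) ∧ (∀ l, IsDensity (ρA l)) ∧ (∀ l, IsDensity (ρB l)) ∧
    ρ = ∑ l, w l • ((ρA l) ⊗ₖ (ρB l))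

/-- The (unnormalized) output assemblage of a one-way LOCC subchannel acting on an
assemblage: `M(σ)_{a'|x'} = K (∑_{a,x} P(x|x') P(a'|x',a,x) σ_{a|x}) K†`. -/
def wired {ι ι₂ A X A' X' : Type} [Fintype ι] [Fintype A] [Fintype X]
    (K : Matrix ι₂ ι ℂ) (Px : X → X' → ℝ) (Pa : A' → X' → A → X → ℝ)
    (σ : A → X → HMat ι) : A' → X' → HMat ι₂ :=
  fun a' x' => K * (∑ x, ∑ a, (Px x x' * Pa a' x' a x) • σ a x) * Kᴴ

instance matMeasurableSpace {m n : Type} : MeasurableSpace (Matrix m n ℂ) :=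
  inferInstanceAs (MeasurableSpace (m → n → ℂ))

/-- The `(U ⊗ U*)`-twirl of a bipartite state with respect to a measure `μ` on the
unitary group (entrywise Bochner integral). -/
def twirl {ι : Type} [Fintype ι] [DecidableEq ι]
    (μ : Measure (Matrix.unitaryGroup ι ℂ)) (ρ : Matrix (ι × ι) (ι × ι) ℂ) :
    Matrix (ι × ι) (ι × ι) ℂ :=
  Matrix.of fun p q =>
    ∫ V : Matrix.unitaryGroup ι ℂ,
      ((((V : Matrix ι ι ℂ)) ⊗ₖ ((V : Matrix ι ι ℂ).map (starRingEnd ℂ))) * ρ *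
        ((((V : Matrix ι ι ℂ)) ⊗ₖ ((V : Matrix ι ι ℂ).map (starRingEnd ℂ)))ᴴ)) p q ∂μ

open Matrix

theorem _root_.Matrix.PosSemidef.trace_mul_nonneg {n : Type} [Fintype n] [DecidableEq n]
    {M N : Matrix n n ℂ} (hM : M.PosSemidef) (hN : N.PosSemidef) : 0 ≤ (M * N).trace := by
  open scoped MatrixOrder in
  obtain ⟨S, rfl⟩ := CStarAlgebra.nonneg_iff_eq_star_mul_self.mp hM.nonneg
  rw [Matrix.mul_assoc, trace_mul_comm, star_eq_conjTranspose]
  exact (hN.mul_mul_conjTranspose_same S).trace_nonneg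

theorem _root_.Matrix.PosSemidef.re_trace_mul_nonneg {n : Type} [Fintype n] [DecidableEq n]
    {M N : Matrix n n ℂ} (hM : M.PosSemidef) (hN : N.PosSemidef) : 0 ≤ (M * N).trace.re :=
  (Complex.nonneg_iff.mp (hM.trace_mul_nonneg hN)).1

theorem trace_mul_conjTranspose_mul_mul {m n : Type} [Fintype m] [Fintype n]
    (σ : Matrix n n ℂ) (W : Matrix m m ℂ) (Q : Matrix m n ℂ) :
    (σ * (Qᴴ * W * Q)).trace = (Q * σ * Qᴴ * W).trace := by
  rw [← Matrix.mul_assoc, ← Matrix.mul_assoc, trace_mul_comm]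
  simp only [Matrix.mul_assoc]

theorem IsDensity.conj {n : Type} [Fintype n] [DecidableEq n] {ρ Q : HMat n}
    (hρ : IsDensity ρ) (hQ : Q ∈ unitaryGroup n ℂ) : IsDensity (Q * ρ * Qᴴ) := by
  refine ⟨hρ.1.mul_mul_conjTranspose_same Q, ?_⟩
  rw [trace_mul_comm, ← Matrix.mul_assoc, ← star_eq_conjTranspose,
    (mem_unitaryGroup_iff'.mp hQ), Matrix.one_mul, hρ.2]

theorem IsDensity.re_trace_mul_le_one {n : Type} [Fintype n] [DecidableEq n] {ρ E : HMat n}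
    (hρ : IsDensity ρ) (hE : (1 - E).PosSemidef) : (ρ * E).trace.re ≤ 1 := by
  have h := hρ.1.re_trace_mul_nonneg hE
  rw [Matrix.mul_sub, Matrix.mul_one, trace_sub, hρ.2, Complex.sub_re, Complex.one_re] at h
  linarith

/-- If `W ≥ 0` maps the range of the orthogonal projection `P` to itself by the scalar `c`, then
`W = c P + (1 - P) W (1 - P) ≥ c P`. -/
theorem re_mul_re_trace_le_of_mul_eq_smul {n : Type} [Fintype n] [DecidableEq n]
    {P W σ : HMat n} {c : ℂ} (hP : P.IsHermitian) (hPP : P * P = P) (hW : W.PosSemidef)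
    (hσ : σ.PosSemidef) (hWP : W * P = c • P) :
    c.re * (P * σ).trace.re ≤ (σ * W).trace.re := by
  have hPW : P * W = star c • P := by
    simpa [conjTranspose_mul, hP.eq, hW.1.eq] using congrArg conjTranspose hWP
  have hdecomp : W = c • P + (1 - P)ᴴ * W * (1 - P) := by
    simp only [conjTranspose_sub, conjTranspose_one, hP.eq, Matrix.sub_mul, Matrix.mul_sub,
      Matrix.one_mul, Matrix.mul_one, hPW, hWP, smul_mul_assoc, hPP]
    abel
  have hrest := hσ.re_trace_mul_nonneg (hW.conjTranspose_mul_mul_same (1 - P))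
  have hPpsd : P.PosSemidef := by simpa [hP.eq, hPP] using posSemidef_conjTranspose_mul_self P
  have hreal : (P * σ).trace.im = 0 :=
    (Complex.nonneg_iff.mp (hPpsd.trace_mul_nonneg hσ)).2.symm
  conv_rhs => rw [hdecomp]
  rw [Matrix.mul_add, trace_add, Matrix.mul_smul, trace_smul, trace_mul_comm σ P, smul_eq_mul,
    Complex.add_re, Complex.mul_re, hreal, mul_zero, sub_zero]
  linarith

section MaxEnt

variable (ι : Type) [Fintype ι] [DecidableEq ι]

theorem maxEnt_eq_smul_vecMulVec :
    maxEnt ι = ((Fintype.card ι : ℂ))⁻¹ • vecMulVec (vec (1 : HMat ι)) (vec 1) := by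
  ext ⟨p, q⟩ ⟨r, s⟩
  by_cases h₁ : p = q <;> by_cases h₂ : r = s <;>
    simp [maxEnt, vecMulVec_apply, one_apply, h₁, h₂, eq_comm]

theorem vec_one_dotProduct (w : ι × ι → ℂ) : vec (1 : HMat ι) ⬝ᵥ w = ∑ i, w (i, i) := by
  simp [dotProduct, Fintype.sum_prod_type, one_apply]

theorem maxEnt_posSemidef : (maxEnt ι).PosSemidef := by
  rw [maxEnt_eq_smul_vecMulVec]
  simpa [star_vec] using (posSemidef_vecMulVec_self_star (vec (1 : HMat ι))).smul
    (inv_nonneg.mpr (Nat.cast_nonneg (α := ℂ) (Fintype.card ι)))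

variable [Nonempty ι]

theorem maxEnt_mul_self : maxEnt ι * maxEnt ι = maxEnt ι := by
  have hcard : (Fintype.card ι : ℂ) ≠ 0 := Nat.cast_ne_zero.mpr Fintype.card_ne_zero
  rw [maxEnt_eq_smul_vecMulVec, smul_mul_smul_comm, vecMulVec_mul_vecMulVec, vecMulVec_smul,
    vec_one_dotProduct]
  simp [smul_smul, hcard]

theorem maxEnt_isDensity : IsDensity (maxEnt ι) := by
  refine ⟨maxEnt_posSemidef ι, ?_⟩
  rw [maxEnt_eq_smul_vecMulVec, trace_smul, trace_vecMulVec, vec_one_dotProduct]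
  simp [Fintype.card_ne_zero]

end MaxEnt

section Measurements

variable {ι A X : Type} [Fintype ι] [DecidableEq ι] [Fintype A]

theorem IsPOVM.one_sub_posSemidef {E : A → X → HMat ι} (hE : IsPOVM E) (a : A) (x : X) :
    (1 - E a x).PosSemidef := by
  classical
  rw [← hE.2 x, ← Finset.add_sum_erase _ _ (Finset.mem_univ a), add_sub_cancel_left]
  exact posSemidef_sum _ fun a' _ => hE.1 a' x

theorem IsPOVM.conj {κ : Type} [Fintype κ] [DecidableEq κ] {E : A → X → HMat κ} (hE : IsPOVM E)
    {V : Matrix κ ι ℂ} (hV : Vᴴ * V = 1) : IsPOVM fun a x => Vᴴ * E a x * V := by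
  refine ⟨fun a x => (hE.1 a x).conjTranspose_mul_mul_same V, fun x => ?_⟩
  change ∑ a, Vᴴ * E a x * V = 1
  rw [← Matrix.sum_mul, ← Matrix.mul_sum, hE.2 x, Matrix.mul_one, hV]

def deterministicPOVM [DecidableEq A] (a₀ : A) : A → X → HMat ι :=
  fun a _ => if a = a₀ then 1 else 0

theorem isPOVM_deterministicPOVM [DecidableEq A] (a₀ : A) :
    IsPOVM (deterministicPOVM (ι := ι) (X := X) a₀) := by
  refine ⟨fun a x => ?_, fun x => by simp [deterministicPOVM]⟩
  by_cases h : a = a₀ <;> simp [deterministicPOVM, h, PosSemidef.one, PosSemidef.zero]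

end Measurements

section Correlations

variable {ιA ιB A B X Y : Type} [Fintype ιA] [Fintype ιB]

theorem quantumCorr_conj {κA κB : Type} [Fintype κA] [Fintype κB]
    (ρ : Matrix (ιA × ιB) (ιA × ιB) ℂ) (EA : A → X → HMat κA) (EB : B → Y → HMat κB)
    (VA : Matrix κA ιA ℂ) (VB : Matrix κB ιB ℂ) :
    quantumCorr ρ (fun a x => VAᴴ * EA a x * VA) (fun b y => VBᴴ * EB b y * VB) =
      quantumCorr ((VA ⊗ₖ VB) * ρ * (VA ⊗ₖ VB)ᴴ) EA EB := by
  ext a b x y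
  simp only [quantumCorr]
  rw [mul_kronecker_mul, mul_kronecker_mul, ← conjTranspose_kronecker,
    trace_mul_conjTranspose_mul_mul]

variable [DecidableEq ιA] [DecidableEq ιB]

theorem one_sub_kronecker_posSemidef {E : HMat ιA} {F : HMat ιB} (hE : (1 - E).PosSemidef)
    (hF : F.PosSemidef) (hF' : (1 - F).PosSemidef) : (1 - E ⊗ₖ F).PosSemidef := by
  have h : 1 - E ⊗ₖ F = (1 - E) ⊗ₖ F + (1 : HMat ιA) ⊗ₖ (1 - F) := by
    rw [eq_comm, ← sub_eq_zero, ← one_kronecker_one]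
    ext ⟨i₁, i₂⟩ ⟨j₁, j₂⟩
    simp only [Matrix.sub_apply, Matrix.add_apply, kroneckerMap_apply, Matrix.zero_apply]
    ring
  rw [h]
  exact (hE.kronecker hF).add (PosSemidef.one.kronecker hF')

variable [Fintype A] [Fintype B]

theorem quantumCorr_le_one {ρ : Matrix (ιA × ιB) (ιA × ιB) ℂ} (hρ : IsDensity ρ)
    {EA : A → X → HMat ιA} {EB : B → Y → HMat ιB} (hEA : IsPOVM EA) (hEB : IsPOVM EB)
    (a : A) (b : B) (x : X) (y : Y) : quantumCorr ρ EA EB a b x y ≤ 1 :=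
  hρ.re_trace_mul_le_one <| one_sub_kronecker_posSemidef (hEA.one_sub_posSemidef a x)
    (hEB.1 b y) (hEB.one_sub_posSemidef b y)

theorem exists_isPOVM_quantumCorr_eq_conj {ρ : Matrix (ιA × ιB) (ιA × ιB) ℂ}
    {EA : A → X → HMat ιA} {EB : B → Y → HMat ιB} (hEA : IsPOVM EA) (hEB : IsPOVM EB)
    {VA : HMat ιA} {VB : HMat ιB} (hVA : VA ∈ unitaryGroup ιA ℂ) (hVB : VB ∈ unitaryGroup ιB ℂ) :
    ∃ (EA' : A → X → HMat ιA) (EB' : B → Y → HMat ιB), IsPOVM EA' ∧ IsPOVM EB' ∧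
      quantumCorr ρ EA' EB' = quantumCorr ((VA ⊗ₖ VB) * ρ * (VA ⊗ₖ VB)ᴴ) EA EB :=
  ⟨_, _, hEA.conj (Unitary.star_mul_self_of_mem hVA), hEB.conj (Unitary.star_mul_self_of_mem hVB),
    quantumCorr_conj ρ EA EB VA VB⟩

variable [Fintype X] [Fintype Y]

def bellOperator (Bf : A → B → X → Y → ℝ) (EA : A → X → HMat ιA) (EB : B → Y → HMat ιB) :
    Matrix (ιA × ιB) (ιA × ιB) ℂ :=
  ∑ x, ∑ y, ∑ a, ∑ b, (Bf a b x y : ℂ) • (EA a x ⊗ₖ EB b y)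

theorem bellValue_quantumCorr (Bf : A → B → X → Y → ℝ) (ρ : Matrix (ιA × ιB) (ιA × ιB) ℂ)
    (EA : A → X → HMat ιA) (EB : B → Y → HMat ιB) :
    bellValue Bf (quantumCorr ρ EA EB) = (ρ * bellOperator Bf EA EB).trace.re := by
  simp [bellValue, quantumCorr, bellOperator, Finset.mul_sum, trace_sum, Complex.re_sum]

theorem bellOperator_posSemidef {Bf : A → B → X → Y → ℝ} (hBf : ∀ a b x y, 0 ≤ Bf a b x y)
    {EA : A → X → HMat ιA} {EB : B → Y → HMat ιB} (hEA : IsPOVM EA) (hEB : IsPOVM EB) :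
    (bellOperator Bf EA EB).PosSemidef :=
  posSemidef_sum _ fun x _ => posSemidef_sum _ fun y _ => posSemidef_sum _ fun a _ =>
    posSemidef_sum _ fun b _ =>
      ((hEA.1 a x).kronecker (hEB.1 b y)).smul (Complex.zero_le_real.mpr (hBf a b x y))

theorem bellValue_quantumCorr_deterministicPOVM [DecidableEq A] [DecidableEq B]
    (Bf : A → B → X → Y → ℝ) {ρ : Matrix (ιA × ιB) (ιA × ιB) ℂ} (hρ : ρ.trace = 1)
    (a₀ : A) (b₀ : B) :
    bellValue Bf (quantumCorr ρ (deterministicPOVM a₀) (deterministicPOVM b₀)) =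
      ∑ x, ∑ y, Bf a₀ b₀ x y := by
  have hP : ∀ a b x y,
      quantumCorr ρ (deterministicPOVM (X := X) a₀) (deterministicPOVM (X := Y) b₀) a b x y =
        if a = a₀ ∧ b = b₀ then 1 else 0 := by
    intro a b x y
    by_cases ha : a = a₀ <;> by_cases hb : b = b₀ <;>
      simp [quantumCorr, deterministicPOVM, ha, hb, hρ]
  simp [bellValue, hP, ite_and]

end Correlations

section LocalBound

variable {A B X Y : Type} [Fintype A] [Fintype B]

theorem IsLHV.nonneg {P : A → B → X → Y → ℝ} (hP : IsLHV P) (a : A) (b : B) (x : X) (y : Y) :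
    0 ≤ P a b x y := by
  obtain ⟨n, w, pA, pB, hw, -, hpA, -, hpB, -, hP⟩ := hP
  rw [hP]
  exact Finset.sum_nonneg fun l _ => mul_nonneg (mul_nonneg (hw l) (hpA a x l)) (hpB b y l)

theorem IsLHV.le_one {P : A → B → X → Y → ℝ} (hP : IsLHV P) (a : A) (b : B) (x : X) (y : Y) :
    P a b x y ≤ 1 := by
  obtain ⟨n, w, pA, pB, hw, hw₁, hpA, hpA₁, hpB, hpB₁, hP⟩ := hP
  rw [hP, ← hw₁]
  refine Finset.sum_le_sum fun l _ => ?_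
  have hA : pA a x l ≤ 1 := by
    rw [← hpA₁ x l]
    exact Finset.single_le_sum (fun a' _ => hpA a' x l) (Finset.mem_univ a)
  have hB : pB b y l ≤ 1 := by
    rw [← hpB₁ y l]
    exact Finset.single_le_sum (fun b' _ => hpB b' y l) (Finset.mem_univ b)
  calc w l * pA a x l * pB b y l ≤ w l * pA a x l :=
        mul_le_of_le_one_right (mul_nonneg (hw l) (hpA a x l)) hB
    _ ≤ w l := mul_le_of_le_one_right (hw l) hA

variable [Fintype X] [Fintype Y]

theorem bellValue_le_sum {Bf P : A → B → X → Y → ℝ} (hBf : ∀ a b x y, 0 ≤ Bf a b x y)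
    (hP : ∀ a b x y, P a b x y ≤ 1) : bellValue Bf P ≤ ∑ x, ∑ y, ∑ a, ∑ b, Bf a b x y := by
  unfold bellValue
  gcongr with x _ y _ a _ b _
  exact mul_le_of_le_one_right (hBf a b x y) (hP a b x y)

theorem bellValue_le_localBound {Bf P : A → B → X → Y → ℝ} (hBf : ∀ a b x y, 0 ≤ Bf a b x y)
    (hP : IsLHV P) : bellValue Bf P ≤ localBound Bf := by
  refine le_csSup ⟨∑ x, ∑ y, ∑ a, ∑ b, Bf a b x y, ?_⟩ ⟨P, hP, rfl⟩
  rintro _ ⟨Q, hQ, rfl⟩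
  exact bellValue_le_sum hBf hQ.le_one

theorem not_isLHV_of_one_lt_nonlocalityFraction {Bf P : A → B → X → Y → ℝ}
    (hBf : ∀ a b x y, 0 ≤ Bf a b x y) (hω : 0 < localBound Bf)
    (h : 1 < nonlocalityFraction P Bf) : ¬ IsLHV P := fun hP =>
  ((one_lt_div hω).mp h).not_ge (bellValue_le_localBound hBf hP)

theorem exists_pos_of_localBound_pos {Bf : A → B → X → Y → ℝ} (hω : 0 < localBound Bf) :
    ∃ a b x y, 0 < Bf a b x y := by
  by_contra! hBf
  refine hω.not_ge (Real.sSup_nonpos fun _ ⟨P, hP, hr⟩ => hr ▸ ?_)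
  exact Finset.sum_nonpos fun x _ => Finset.sum_nonpos fun y _ => Finset.sum_nonpos fun a _ =>
    Finset.sum_nonpos fun b _ => mul_nonpos_of_nonpos_of_nonneg (hBf a b x y) (hP.nonneg a b x y)

theorem LV_pos {ιA ιB : Type} [Fintype ιA] [Fintype ιB] [DecidableEq ιA] [DecidableEq ιB]
    {ρ : Matrix (ιA × ιB) (ιA × ιB) ℂ} (hρ : IsDensity ρ) {Bf : A → B → X → Y → ℝ}
    (hBf : ∀ a b x y, 0 ≤ Bf a b x y) (hω : 0 < localBound Bf) : 0 < LV ρ Bf := by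
  classical
  obtain ⟨a₀, b₀, x₀, y₀, hpos⟩ := exists_pos_of_localBound_pos hω
  have hbdd : BddAbove {r : ℝ | ∃ (EA : A → X → HMat ιA) (EB : B → Y → HMat ιB),
      IsPOVM EA ∧ IsPOVM EB ∧ r = nonlocalityFraction (quantumCorr ρ EA EB) Bf} := by
    refine ⟨(∑ x, ∑ y, ∑ a, ∑ b, Bf a b x y) / localBound Bf, ?_⟩
    rintro _ ⟨EA, EB, hEA, hEB, rfl⟩
    exact div_le_div_of_nonneg_right (bellValue_le_sum hBf (quantumCorr_le_one hρ hEA hEB)) hω.le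
  refine lt_of_lt_of_le ?_ (le_csSup hbdd ⟨deterministicPOVM a₀, deterministicPOVM b₀,
    isPOVM_deterministicPOVM a₀, isPOVM_deterministicPOVM b₀, rfl⟩)
  rw [nonlocalityFraction, bellValue_quantumCorr_deterministicPOVM Bf hρ.2]
  refine div_pos (lt_of_lt_of_le hpos ?_) hω
  calc Bf a₀ b₀ x₀ y₀ ≤ ∑ y, Bf a₀ b₀ x₀ y :=
        Finset.single_le_sum (fun y _ => hBf a₀ b₀ x₀ y) (Finset.mem_univ y₀)
    _ ≤ ∑ x, ∑ y, Bf a₀ b₀ x y :=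
        Finset.single_le_sum (f := fun x => ∑ y, Bf a₀ b₀ x y)
          (fun x _ => Finset.sum_nonneg fun y _ => hBf a₀ b₀ x y) (Finset.mem_univ x₀)

theorem exists_lt_nonlocalityFraction_of_lt_LV {ιA ιB : Type} [Fintype ιA] [Fintype ιB]
    [DecidableEq ιA] [DecidableEq ιB] {ρ : Matrix (ιA × ιB) (ιA × ιB) ℂ}
    {Bf : A → B → X → Y → ℝ} (hω : 0 < localBound Bf) {r : ℝ} (h : r < LV ρ Bf) :
    ∃ (EA : A → X → HMat ιA) (EB : B → Y → HMat ιB), IsPOVM EA ∧ IsPOVM EB ∧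
      r < nonlocalityFraction (quantumCorr ρ EA EB) Bf := by
  classical
  obtain ⟨a₀, b₀, -⟩ := exists_pos_of_localBound_pos hω
  rw [LV] at h
  obtain ⟨_, ⟨EA, EB, hEA, hEB, rfl⟩, hr⟩ := exists_lt_of_lt_csSup
    (by exact ⟨_, deterministicPOVM a₀, deterministicPOVM b₀, isPOVM_deterministicPOVM a₀,
      isPOVM_deterministicPOVM b₀, rfl⟩) h
  exact ⟨EA, EB, hEA, hEB, hr⟩

end LocalBound

section Weyl

variable {d : ℕ}

def zeta (d : ℕ) : ℂ := Complex.exp (2 * Real.pi * Complex.I / d)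

theorem zeta_ne_zero : zeta d ≠ 0 := Complex.exp_ne_zero _

/-- The Weyl (clock-and-shift) operator `X^j Z^k`. -/
def weyl (j k : Fin d) : HMat (Fin d) :=
  of fun p q => if p = q + j then zeta d ^ ((k : ℕ) * q) else 0

theorem conjTranspose_weyl_mul_mul_apply (j k : Fin d) (M : HMat (Fin d)) (p q : Fin d) :
    ((weyl j k)ᴴ * M * weyl j k) p q =
      star (zeta d ^ ((k : ℕ) * p)) * M (p + j) (q + j) * zeta d ^ ((k : ℕ) * q) := by
  simp only [mul_apply, conjTranspose_apply, weyl, of_apply, apply_ite star, star_zero, ite_mul,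
    zero_mul, mul_ite, mul_zero, Finset.sum_ite_eq', Finset.mem_univ, if_true]

variable [NeZero d]

theorem isPrimitiveRoot_zeta : IsPrimitiveRoot (zeta d) d :=
  Complex.isPrimitiveRoot_exp d (NeZero.ne d)

theorem star_zeta_pow (m : ℕ) : star (zeta d ^ m) = (zeta d ^ m)⁻¹ := by
  rw [Complex.inv_eq_conj (by rw [norm_pow, isPrimitiveRoot_zeta.norm'_eq_one (NeZero.ne d),
    one_pow]), Complex.star_def]

theorem sum_star_zeta_pow_mul_zeta_pow (p q : Fin d) :
    ∑ k : Fin d, star (zeta d ^ ((k : ℕ) * p)) * zeta d ^ ((k : ℕ) * q) =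
      if p = q then (d : ℂ) else 0 := by
  set z := (zeta d ^ (p : ℕ))⁻¹ * zeta d ^ (q : ℕ)
  have hterm (k : Fin d) :
      star (zeta d ^ ((k : ℕ) * p)) * zeta d ^ ((k : ℕ) * q) = z ^ (k : ℕ) := by
    rw [star_zeta_pow, mul_pow, inv_pow, ← pow_mul, ← pow_mul, mul_comm (p : ℕ), mul_comm (q : ℕ)]
  simp_rw [hterm]
  rw [Fin.sum_univ_eq_sum_range (z ^ ·)]
  split_ifs with hpq
  · simp [z, hpq, zeta_ne_zero]
  · have hz : z ≠ 1 := fun hz => hpq <| Fin.ext <| isPrimitiveRoot_zeta.pow_inj p.isLt q.isLt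
      ((inv_mul_eq_one₀ (pow_ne_zero _ zeta_ne_zero)).mp hz)
    have hzd : z ^ d = 1 := by
      rw [mul_pow, inv_pow, ← pow_mul, ← pow_mul, mul_comm (p : ℕ), mul_comm (q : ℕ), pow_mul,
        pow_mul, isPrimitiveRoot_zeta.pow_eq_one, one_pow, one_pow, inv_one, one_mul]
    rw [geom_sum_eq hz, hzd, sub_self, zero_div]

theorem weyl_mem_unitaryGroup (j k : Fin d) : weyl j k ∈ unitaryGroup (Fin d) ℂ := by
  rw [mem_unitaryGroup_iff', star_eq_conjTranspose]
  ext p q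
  have h := conjTranspose_weyl_mul_mul_apply j k 1 p q
  rw [Matrix.mul_one] at h
  rw [h]
  by_cases hpq : p = q
  · rw [hpq, one_apply_eq, one_apply_eq, mul_one, star_zeta_pow,
      inv_mul_cancel₀ (pow_ne_zero _ zeta_ne_zero)]
  · simp [one_apply, hpq]

/-- The Weyl operators form a unitary 1-design. -/
theorem sum_conjTranspose_weyl_mul_mul (M : HMat (Fin d)) :
    ∑ j, ∑ k, (weyl j k)ᴴ * M * weyl j k = ((d : ℂ) * M.trace) • 1 := by
  ext p q
  simp only [Matrix.sum_apply, conjTranspose_weyl_mul_mul_apply, Matrix.smul_apply, one_apply,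
    smul_eq_mul]
  have hk (j : Fin d) : ∑ k : Fin d,
      star (zeta d ^ ((k : ℕ) * p)) * M (p + j) (q + j) * zeta d ^ ((k : ℕ) * q) =
        (if p = q then (d : ℂ) else 0) * M (p + j) (q + j) := by
    rw [← sum_star_zeta_pow_mul_zeta_pow, Finset.sum_mul]
    exact Finset.sum_congr rfl fun k _ => by ring
  simp_rw [hk]
  split_ifs with hpq
  · subst hpq
    rw [← Finset.mul_sum, mul_one, trace]
    congr 1
    exact Fintype.sum_equiv (Equiv.addLeft p) _ _ fun j => rfl
  · simp

end Weyl

theorem map_star_kronecker_mulVec_vec {ι : Type} [Fintype ι] (V X : HMat ι) :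
    (V.map star ⊗ₖ V) *ᵥ vec X = vec (V * X * Vᴴ) := by
  rw [kronecker_mulVec_vec]
  rfl

theorem conjTranspose_map_star_kronecker_mulVec_vec {ι : Type} [Fintype ι] (V X : HMat ι) :
    (V.map star ⊗ₖ V)ᴴ *ᵥ vec X = vec (Vᴴ * X * V) := by
  rw [conjTranspose_kronecker, kronecker_mulVec_vec]
  congr
  ext
  simp

theorem map_star_kronecker_mulVec_vec_one {ι : Type} [Fintype ι] [DecidableEq ι] {V : HMat ι}
    (hV : V ∈ unitaryGroup ι ℂ) : (V.map star ⊗ₖ V) *ᵥ vec 1 = vec 1 := by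
  rw [map_star_kronecker_mulVec_vec, Matrix.mul_one, ← star_eq_conjTranspose,
    mem_unitaryGroup_iff.mp hV]

theorem trace_maxEnt_mul {ι : Type} [Fintype ι] [DecidableEq ι]
    (M : Matrix (ι × ι) (ι × ι) ℂ) :
    (maxEnt ι * M).trace = (Fintype.card ι : ℂ)⁻¹ * (vec (1 : HMat ι) ⬝ᵥ (M *ᵥ vec 1)) := by
  rw [maxEnt_eq_smul_vecMulVec, Matrix.smul_mul, trace_smul, vecMulVec_mul, trace_vecMulVec,
    dotProduct_mulVec, dotProduct_comm, smul_eq_mul]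

section WeylTwirl

variable {d : ℕ}

def weylPair (j k : Fin d) : Matrix (Fin d × Fin d) (Fin d × Fin d) ℂ :=
  (weyl j k).map star ⊗ₖ weyl j k

variable [NeZero d]

/-- Since `V̄ ⊗ V` fixes `|Ψ⁺⟩ ∝ vec 1` and acts on `vec X` as `X ↦ V X Vᴴ`, the 1-design property
of the Weyl operators makes `|Ψ⁺⟩` an eigenvector of every Weyl-twirled operator. -/
theorem weylTwirl_mul_maxEnt (M : Matrix (Fin d × Fin d) (Fin d × Fin d) ℂ) :
    (∑ j, ∑ k, (weylPair j k)ᴴ * M * weylPair j k) * maxEnt (Fin d) =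
      ((d : ℂ) ^ 2 * (maxEnt (Fin d) * M).trace) • maxEnt (Fin d) := by
  set X : HMat (Fin d) := of fun p q => (M *ᵥ vec 1) (q, p)
  have hX : vec X = M *ᵥ vec 1 := rfl
  have hmulVec : (∑ j, ∑ k, (weylPair j k)ᴴ * M * weylPair j k) *ᵥ vec 1 =
      ((d : ℂ) * X.trace) • vec (1 : HMat (Fin d)) := by
    simp only [Matrix.sum_mulVec, ← Matrix.mulVec_mulVec, weylPair,
      map_star_kronecker_mulVec_vec_one (weyl_mem_unitaryGroup _ _), ← hX,
      conjTranspose_map_star_kronecker_mulVec_vec, ← vec_sum, sum_conjTranspose_weyl_mul_mul,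
      vec_smul]
  have htrace : X.trace = d * (maxEnt (Fin d) * M).trace := by
    rw [trace_maxEnt_mul, Fintype.card_fin, mul_inv_cancel_left₀ (NeZero.ne (d : ℂ)),
      vec_one_dotProduct]
    rfl
  calc _ = ((d : ℂ) * X.trace) • maxEnt (Fin d) := by
        rw [maxEnt_eq_smul_vecMulVec, Matrix.mul_smul, mul_vecMulVec, hmulVec, smul_vecMulVec,
          smul_comm]
    _ = _ := by rw [htrace, ← mul_assoc, sq]

theorem exists_weylPair_lt_re_trace_conj_mul {σ W : Matrix (Fin d × Fin d) (Fin d × Fin d) ℂ}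
    (hσ : σ.PosSemidef) (hW : W.PosSemidef) {ω : ℝ}
    (h : ω < (maxEnt (Fin d) * W).trace.re * (maxEnt (Fin d) * σ).trace.re) :
    ∃ j k, ω < (weylPair j k * σ * (weylPair j k)ᴴ * W).trace.re := by
  have hT : (∑ j, ∑ k, (weylPair j k)ᴴ * W * weylPair j k).PosSemidef :=
    posSemidef_sum _ fun j _ => posSemidef_sum _ fun k _ => hW.conjTranspose_mul_mul_same _
  have hle := re_mul_re_trace_le_of_mul_eq_smul (maxEnt_posSemidef _).1
    (maxEnt_mul_self _) hT hσ (weylTwirl_mul_maxEnt W)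
  simp only [Matrix.mul_sum, trace_sum, Complex.re_sum, trace_mul_conjTranspose_mul_mul,
    ← Fintype.sum_prod_type'] at hle
  obtain ⟨⟨j, k⟩, -, hjk⟩ := Finset.exists_lt_of_sum_lt (f := fun _ => ω) <| by
    refine lt_of_lt_of_le ?_ hle
    have hd : (0 : ℝ) < (d : ℝ) ^ 2 := pow_pos (Nat.cast_pos.mpr (NeZero.pos d)) 2
    simp only [Finset.sum_const, Finset.card_univ, Fintype.card_prod, Fintype.card_fin,
      nsmul_eq_mul]
    rw [show ((d : ℂ) ^ 2) = (((d : ℝ) ^ 2 : ℝ) : ℂ) by push_cast; rfl, Complex.re_ofReal_mul,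
      mul_assoc, Nat.cast_mul, ← sq]
    exact mul_lt_mul_of_pos_left h hd
  exact ⟨j, k, hjk⟩

end WeylTwirl

theorem stmt17_general {A B X Y : Type} [Fintype A] [Fintype B] [Fintype X] [Fintype Y]
    (d : ℕ) (hd : 0 < d)
    (ρ : Matrix (Fin d × Fin d) (Fin d × Fin d) ℂ) (hρ : IsDensity ρ)
    (Bf : A → B → X → Y → ℝ) (hBf : ∀ a b x y, 0 ≤ Bf a b x y)
    (hω : 0 < localBound Bf)
    (h : fef ρ > 1 / LV (maxEnt (Fin d)) Bf) :
    ∃ (EA : A → X → HMat (Fin d)) (EB : B → Y → HMat (Fin d)),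
      IsPOVM EA ∧ IsPOVM EB ∧
      nonlocalityFraction (quantumCorr ρ EA EB) Bf > 1 ∧
      ¬ IsLHV (quantumCorr ρ EA EB) := by
  have : NeZero d := ⟨hd.ne'⟩
  have hLV : 0 < LV (maxEnt (Fin d)) Bf := LV_pos (maxEnt_isDensity _) hBf hω
  rw [gt_iff_lt, fef] at h
  obtain ⟨_, ⟨U, hU, rfl⟩, hF⟩ := exists_lt_of_lt_csSup (by exact ⟨_, 1, one_mem _, rfl⟩) h
  set σ := (U ⊗ₖ (1 : HMat (Fin d))) * ρ * (U ⊗ₖ (1 : HMat (Fin d)))ᴴ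
  have hσ : IsDensity σ := hρ.conj (kronecker_mem_unitary hU (one_mem _))
  have hF₀ : 0 < (maxEnt (Fin d) * σ).trace.re := lt_trans (one_div_pos.mpr hLV) hF
  obtain ⟨EA, EB, hEA, hEB, hΓ⟩ :=
    exists_lt_nonlocalityFraction_of_lt_LV hω ((one_div_lt hLV hF₀).mp hF)
  rw [nonlocalityFraction, lt_div_iff₀ hω, one_div_mul_eq_div, div_lt_iff₀ hF₀,
    bellValue_quantumCorr] at hΓ
  obtain ⟨j, k, hjk⟩ :=
    exists_weylPair_lt_re_trace_conj_mul hσ.1 (bellOperator_posSemidef hBf hEA hEB) hΓ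
  have hV := weyl_mem_unitaryGroup j k
  obtain ⟨EA', EB', hEA', hEB', hP⟩ := exists_isPOVM_quantumCorr_eq_conj (ρ := ρ) hEA hEB
    (mul_mem (map_star_mem_unitaryGroup_iff.mpr hV) hU) hV
  have hpair : ((weyl j k).map star * U) ⊗ₖ weyl j k = weylPair j k * (U ⊗ₖ 1) := by
    rw [weylPair, ← mul_kronecker_mul, Matrix.mul_one]
  rw [hpair] at hP
  have hΓ' : 1 < nonlocalityFraction (quantumCorr ρ EA' EB') Bf := by
    rw [nonlocalityFraction, one_lt_div hω, hP, bellValue_quantumCorr]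
    simpa only [σ, conjTranspose_mul, Matrix.mul_assoc] using hjk
  exact ⟨EA', EB', hEA', hEB', hΓ', not_isLHV_of_one_lt_nonlocalityFraction hBf hω hΓ'⟩

/-- Theorem 5, sufficient condition for Bell nonlocality: if
`F(ρ) > 1 / LV(|Ψ_d⁺⟩⟨Ψ_d⁺|, B)` then `ρ` violates the Bell inequality specified by `B`:
some local POVMs give a quantum correlation with `Γ(P, B) > 1`, which is in particular
not Bell-local. -/
theorem stmt17 {A B X Y : Type} [Fintype A] [Fintype B] [Fintype X] [Fintype Y]
    [Nonempty A] [Nonempty B] [Nonempty X] [Nonempty Y]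
    (d : ℕ) (hd : 0 < d)
    (ρ : Matrix (Fin d × Fin d) (Fin d × Fin d) ℂ) (hρ : IsDensity ρ)
    (Bf : A → B → X → Y → ℝ) (hBf : ∀ a b x y, 0 ≤ Bf a b x y)
    (hω : 0 < localBound Bf)
    (h : fef ρ > 1 / LV (maxEnt (Fin d)) Bf) :
    ∃ (EA : A → X → HMat (Fin d)) (EB : B → Y → HMat (Fin d)),
      IsPOVM EA ∧ IsPOVM EB ∧
      nonlocalityFraction (quantumCorr ρ EA EB) Bf > 1 ∧
      ¬ IsLHV (quantumCorr ρ EA EB) :=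
  stmt17_general d hd ρ hρ Bf hBf hω h

end QSteer

end
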